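/- arXiv:1511.06817 — 2 statements merged into one kernel-verified Lean document; each statement's English description precedes it below -/
import Mathlib

section
/- For the Drude-type constants C_μ = (μ_c ε_c − μ_m ε_m)/(μ_m − μ_c), C_ε = (μ_c ε_c − μ_m ε_m)/(ε_m − ε_c), the scalar second-order eigenvalue corrections of the 4×4 matrix W(r) = W₀ + rW₁ + r²W₂ (with W₀ = diag(λ_μ + 1/(2(2n+1)), λ_μ − 1/(2(2n+1)), λ_ε + 1/(2(2n+1)), λ_ε − 1/(2(2n+1))), W₁ having ω C_μ p_n, ω C_μ q_n, ω C_ε p_n, ω C_ε q_n in the antidiagonal positions as specified, and W₂ = ω² diag(D_μ r_n, D_μ s_n, D_ε r_n, D_ε s_n)) are: the first eigenvalue satisfies τ₁(r) = λ_μ + 1/(2(2n+1)) + (rω)²[C_ε C_μ p_n q_n/(λ_μ − λ_ε + p_n) + D_μ r_n] + O(r³), assuming λ_μ − λ_ε ± p_n ≠ 0. -/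
/-! `W(r)` leaves the coordinate pairs `{1, 4}` and `{2, 3}` invariant, so its characteristic
polynomial is the product of the two `2 × 2` block determinants. Near `r = 0` the eigenvalue
`τ₁(r)` stays away from the roots `λ_μ − 1/(2(2n+1))`, `λ_ε + 1/(2(2n+1))` of the `{2, 3}` block,
so it is a root of the `{1, 4}` block. Writing `δ = τ₁ − W(r)₁₁`, that root equation reads
`δ (λ_μ − λ_ε + p_n + O(r²) + δ) = r² ω² C_μ C_ε p_n q_n`; hence first `δ = O(r²)`, and then
`δ − r² ω² C_μ C_ε p_n q_n / (λ_μ − λ_ε + p_n) = O(δ (r² + δ)) = O(r⁴)`. -/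

open Asymptotics Filter Matrix

noncomputable section

/-- `λ_μ = (μ_c+μ_m)/(2(μ_m−μ_c))`. -/
def lamMu (μc μm : ℂ) : ℂ := (μc + μm) / (2 * (μm - μc))

/-- `λ_ε = (ε_c+ε_m)/(2(ε_m−ε_c))`. -/
def lamEps (εc εm : ℂ) : ℂ := (εc + εm) / (2 * (εm - εc))

/-- `p_n = 1/(2n+1)`. -/
def pCoef (n : ℕ) : ℂ := 1 / (2 * (n : ℂ) + 1)

/-- `q_n = (n+1)(n−2)/(2(2n−1)(2n+1)) − n(n+3)/(2(2n+1)(2n+3))`. -/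
def qCoef (n : ℕ) : ℂ :=
  ((n : ℂ) + 1) * ((n : ℂ) - 2) / (2 * (2 * (n : ℂ) - 1) * (2 * (n : ℂ) + 1)) -
    (n : ℂ) * ((n : ℂ) + 3) / (2 * (2 * (n : ℂ) + 1) * (2 * (n : ℂ) + 3))

/-- `r_n = −(n+1)/(2(2n−1)(2n+1)) + (n+3)/(2(2n+1)(2n+3))`. -/
def rCoef (n : ℕ) : ℂ :=
  -(((n : ℂ) + 1) / (2 * (2 * (n : ℂ) - 1) * (2 * (n : ℂ) + 1))) +
    ((n : ℂ) + 3) / (2 * (2 * (n : ℂ) + 1) * (2 * (n : ℂ) + 3))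

/-- `s_n = −(n−2)/(2(2n−1)(2n+1)) + n/(2(2n+1)(2n+3))`. -/
def sCoef (n : ℕ) : ℂ :=
  -((((n : ℂ) - 2)) / (2 * (2 * (n : ℂ) - 1) * (2 * (n : ℂ) + 1))) +
    (n : ℂ) / (2 * (2 * (n : ℂ) + 1) * (2 * (n : ℂ) + 3))

/-- `C_μ = (μ_cε_c − μ_mε_m)/(μ_m − μ_c)`. -/
def cMu (μc μm εc εm : ℂ) : ℂ := (μc * εc - μm * εm) / (μm - μc)

/-- `C_ε = (μ_cε_c − μ_mε_m)/(ε_m − ε_c)`. -/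
def cEps (μc μm εc εm : ℂ) : ℂ := (μc * εc - μm * εm) / (εm - εc)

/-- `D_μ = (ε_cμ_c² − ε_mμ_m²)/(μ_m − μ_c)`. -/
def dMu (μc μm εc εm : ℂ) : ℂ := (εc * μc ^ 2 - εm * μm ^ 2) / (μm - μc)

/-- `D_ε = (ε_c²μ_c − ε_m²μ_m)/(ε_m − ε_c)`. -/
def dEps (μc μm εc εm : ℂ) : ℂ := (εc ^ 2 * μc - εm ^ 2 * μm) / (εm - εc)

/-- `W₀ = diag(λ_μ + 1/(2(2n+1)), λ_μ − 1/(2(2n+1)), λ_ε + 1/(2(2n+1)), λ_ε − 1/(2(2n+1)))`. -/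
def W0mat (n : ℕ) (μc μm εc εm : ℂ) : Matrix (Fin 4) (Fin 4) ℂ :=
  Matrix.diagonal
    ![lamMu μc μm + 1 / (2 * (2 * (n : ℂ) + 1)),
      lamMu μc μm - 1 / (2 * (2 * (n : ℂ) + 1)),
      lamEps εc εm + 1 / (2 * (2 * (n : ℂ) + 1)),
      lamEps εc εm - 1 / (2 * (2 * (n : ℂ) + 1))]

/-- `W₁` with entries `(W₁)₁₄ = ωC_μp_n`, `(W₁)₂₃ = ωC_μq_n`, `(W₁)₃₂ = ωC_εp_n`,
`(W₁)₄₁ = ωC_εq_n`, all other entries zero. -/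
def W1mat (n : ℕ) (μc μm εc εm ω : ℂ) : Matrix (Fin 4) (Fin 4) ℂ :=
  !![0, 0, 0, ω * cMu μc μm εc εm * pCoef n;
     0, 0, ω * cMu μc μm εc εm * qCoef n, 0;
     0, ω * cEps μc μm εc εm * pCoef n, 0, 0;
     ω * cEps μc μm εc εm * qCoef n, 0, 0, 0]

/-- `W₂ = ω² diag(D_μr_n, D_μs_n, D_εr_n, D_εs_n)`. -/
def W2mat (n : ℕ) (μc μm εc εm ω : ℂ) : Matrix (Fin 4) (Fin 4) ℂ :=
  Matrix.diagonal
    ![ω ^ 2 * dMu μc μm εc εm * rCoef n,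
      ω ^ 2 * dMu μc μm εc εm * sCoef n,
      ω ^ 2 * dEps μc μm εc εm * rCoef n,
      ω ^ 2 * dEps μc μm εc εm * sCoef n]

/-- `W(r) = W₀ + rW₁ + r²W₂`. -/
def Wmat (n : ℕ) (μc μm εc εm ω : ℂ) (r : ℝ) : Matrix (Fin 4) (Fin 4) ℂ :=
  W0mat n μc μm εc εm + (r : ℂ) • W1mat n μc μm εc εm ω +
    ((r : ℂ)) ^ 2 • W2mat n μc μm εc εm ω

end

open Topology

theorem Asymptotics.isBigO_sub_div_of_mul_add_eq {α 𝕜 : Type*} [NormedField 𝕜] {l : Filter α}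
    {A B E : 𝕜} {g δ : α → 𝕜} (hA : A ≠ 0) (hg : Tendsto g l (𝓝 0)) (hδ : Tendsto δ l (𝓝 0))
    (hroot : ∀ᶠ x in l, δ x * (A + g x * E + δ x) = g x * B) :
    (fun x => δ x - g x * B / A) =O[l] fun x => g x ^ 2 := by
  have hD : Tendsto (fun x => A + g x * E + δ x) l (𝓝 A) := by
    simpa using (tendsto_const_nhds.add (hg.mul_const E)).add hδ
  have hδg : δ =O[l] g := by
    have hquot : (fun x => B / (A + g x * E + δ x)) =O[l] fun _ => (1 : 𝕜) :=
      (tendsto_const_nhds.div hD hA).isBigO_one 𝕜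
    refine ((isBigO_refl g l).mul hquot).congr' ?_ (by simp)
    filter_upwards [hroot, hD.eventually_ne hA] with x hx hDx
    rw [mul_div_assoc', div_eq_iff hDx, hx]
  have hsmall : (fun x => g x * E + δ x) =O[l] g :=
    ((isBigO_refl g l).mul (isBigO_const_const E one_ne_zero l)).congr_right (by simp) |>.add hδg
  refine ((hδg.mul hsmall).const_mul_left (-A⁻¹)).congr' ?_ (by simp [sq])
  filter_upwards [hroot] with x hx
  field_simp
  linear_combination -hx

theorem Matrix.det_fin_four_of_cross {R : Type*} [CommRing R] (a b c d e f g h : R) :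
    (!![a, 0, 0, b; 0, c, d, 0; 0, e, f, 0; g, 0, 0, h]).det =
      (a * h - b * g) * (c * f - d * e) := by
  rw [det_succ_row_zero, Fin.sum_univ_four]
  simp only [det_fin_three, submatrix_apply, of_apply, cons_val, Fin.succAbove,
    Fin.coe_ofNat_eq_mod, Fin.reduceSucc, Fin.reduceCastSucc, Fin.reduceLT, ↓reduceIte]
  ring

theorem Matrix.det_sub_smul_one_eq_zero_of_mulVec_eq {ι K : Type*} [Fintype ι] [DecidableEq ι]
    [Field K] {M : Matrix ι ι K} {τ : K} {v : ι → K} (hv : v ≠ 0) (hMv : M *ᵥ v = τ • v) :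
    (M - τ • 1).det = 0 :=
  Matrix.exists_mulVec_eq_zero_iff.mp
    ⟨v, hv, by rw [Matrix.sub_mulVec, Matrix.smul_mulVec, Matrix.one_mulVec, hMv, sub_self]⟩

def blockCharpoly (a b c d x y r τ : ℂ) : ℂ :=
  (a + r ^ 2 * c - τ) * (b + r ^ 2 * d - τ) - r ^ 2 * (x * y)

theorem eventually_blockCharpoly_ne_zero {a b c d x y τ₀ : ℂ} {τ : ℝ → ℂ} (ha : τ₀ ≠ a)
    (hb : τ₀ ≠ b) (hτ : Tendsto τ (𝓝 0) (𝓝 τ₀)) :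
    ∀ᶠ r : ℝ in 𝓝 0, blockCharpoly a b c d x y r (τ r) ≠ 0 := by
  have hcont : Continuous fun p : ℂ × ℂ => blockCharpoly a b c d x y p.1 p.2 := by
    unfold blockCharpoly; fun_prop
  have hofReal := Complex.continuous_ofReal.tendsto' 0 0 Complex.ofReal_zero
  refine ((hcont.tendsto (0, τ₀)).comp (hofReal.prodMk_nhds hτ)).eventually_ne ?_
  simpa [blockCharpoly] using mul_ne_zero (sub_ne_zero.2 ha.symm) (sub_ne_zero.2 hb.symm)

theorem isBigO_sub_secondOrder_of_blockCharpoly_eq_zero {a b c d x y : ℂ} {τ : ℝ → ℂ}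
    (hab : a ≠ b) (hτ : Tendsto τ (𝓝 0) (𝓝 a))
    (hroot : ∀ᶠ r : ℝ in 𝓝 0, blockCharpoly a b c d x y r (τ r) = 0) :
    (fun r : ℝ => τ r - (a + (r : ℂ) ^ 2 * (c + x * y / (a - b)))) =O[𝓝 0] fun r => r ^ 3 := by
  have hg : Tendsto (fun r : ℝ => (r : ℂ) ^ 2) (𝓝 0) (𝓝 0) := by
    simpa using (Complex.continuous_ofReal.tendsto' 0 0 Complex.ofReal_zero).pow 2
  have hδ : Tendsto (fun r : ℝ => τ r - (a + (r : ℂ) ^ 2 * c)) (𝓝 0) (𝓝 0) := by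
    simpa using hτ.sub ((tendsto_const_nhds (x := a)).add (hg.mul_const c))
  have hquartic : (fun r : ℝ => ((r : ℂ) ^ 2) ^ 2) =O[𝓝 0] fun r : ℝ => r ^ 3 :=
    (isBigO_of_le _ fun r => by simp [← pow_mul]).trans
      (isLittleO_pow_pow (by norm_num : 3 < 4)).isBigO
  refine ((isBigO_sub_div_of_mul_add_eq (E := c - d) (B := x * y) (sub_ne_zero.2 hab) hg hδ
    ?_).trans hquartic).congr_left fun r => by ring
  filter_upwards [hroot] with r hr
  unfold blockCharpoly at hr
  linear_combination hr

theorem det_Wmat_sub_smul_one (n : ℕ) (μc μm εc εm ω : ℂ) (r : ℝ) (τ : ℂ) :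
    (Wmat n μc μm εc εm ω r - τ • 1).det =
      blockCharpoly (lamMu μc μm + 1 / (2 * (2 * (n : ℂ) + 1)))
          (lamEps εc εm - 1 / (2 * (2 * (n : ℂ) + 1)))
          (ω ^ 2 * dMu μc μm εc εm * rCoef n) (ω ^ 2 * dEps μc μm εc εm * sCoef n)
          (ω * cMu μc μm εc εm * pCoef n) (ω * cEps μc μm εc εm * qCoef n) r τ *
        blockCharpoly (lamMu μc μm - 1 / (2 * (2 * (n : ℂ) + 1)))
          (lamEps εc εm + 1 / (2 * (2 * (n : ℂ) + 1)))
          (ω ^ 2 * dMu μc μm εc εm * sCoef n) (ω ^ 2 * dEps μc μm εc εm * rCoef n)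
          (ω * cMu μc μm εc εm * qCoef n) (ω * cEps μc μm εc εm * pCoef n) r τ := by
  set κ : ℂ := 1 / (2 * (2 * (n : ℂ) + 1))
  have hW : Wmat n μc μm εc εm ω r - τ • 1 =
      !![lamMu μc μm + κ + r ^ 2 * (ω ^ 2 * dMu μc μm εc εm * rCoef n) - τ, 0, 0,
          r * (ω * cMu μc μm εc εm * pCoef n);
        0, lamMu μc μm - κ + r ^ 2 * (ω ^ 2 * dMu μc μm εc εm * sCoef n) - τ,
          r * (ω * cMu μc μm εc εm * qCoef n), 0;
        0, r * (ω * cEps μc μm εc εm * pCoef n),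
          lamEps εc εm + κ + r ^ 2 * (ω ^ 2 * dEps μc μm εc εm * rCoef n) - τ, 0;
        r * (ω * cEps μc μm εc εm * qCoef n), 0, 0,
          lamEps εc εm - κ + r ^ 2 * (ω ^ 2 * dEps μc μm εc εm * sCoef n) - τ] := by
    ext i j
    fin_cases i <;> fin_cases j <;> simp [Wmat, W0mat, W1mat, W2mat, κ]
  rw [hW, Matrix.det_fin_four_of_cross, blockCharpoly, blockCharpoly]
  ring

theorem sphere_second_order_eigenvalue_correction_general
    (n : ℕ) (μc μm εc εm ω : ℂ)
    (hne : lamMu μc μm ≠ lamEps εc εm)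
    (hplus : lamMu μc μm - lamEps εc εm + pCoef n ≠ 0)
    (τ₁ : ℝ → ℂ)
    (hτ0 : τ₁ 0 = lamMu μc μm + 1 / (2 * (2 * (n : ℂ) + 1)))
    (hτc : ContinuousAt τ₁ 0)
    (hτeig : ∀ r : ℝ, ∃ v : Fin 4 → ℂ, v ≠ 0 ∧
        (Wmat n μc μm εc εm ω r).mulVec v = τ₁ r • v) :
    (fun r : ℝ => τ₁ r -
        (lamMu μc μm + 1 / (2 * (2 * (n : ℂ) + 1)) +
          ((r : ℂ) * ω) ^ 2 *
            (cEps μc μm εc εm * cMu μc μm εc εm * pCoef n * qCoef n /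
                (lamMu μc μm - lamEps εc εm + pCoef n) +
              dMu μc μm εc εm * rCoef n)))
      =O[nhds 0] fun r : ℝ => r ^ 3 := by
  set κ : ℂ := 1 / (2 * (2 * (n : ℂ) + 1))
  have hκ : κ ≠ 0 :=
    one_div_ne_zero (mul_ne_zero two_ne_zero (by exact_mod_cast (2 * n).succ_ne_zero))
  have hgap : lamMu μc μm + κ - (lamEps εc εm - κ) = lamMu μc μm - lamEps εc εm + pCoef n := by
    rw [show κ = pCoef n / 2 by simp only [κ, pCoef, div_div, mul_comm]]
    ring
  have hτ : Tendsto τ₁ (𝓝 0) (𝓝 (lamMu μc μm + κ)) := hτ0 ▸ hτc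
  have houter : ∀ᶠ r : ℝ in 𝓝 0, blockCharpoly (lamMu μc μm + κ) (lamEps εc εm - κ)
      (ω ^ 2 * dMu μc μm εc εm * rCoef n) (ω ^ 2 * dEps μc μm εc εm * sCoef n)
      (ω * cMu μc μm εc εm * pCoef n) (ω * cEps μc μm εc εm * qCoef n) r (τ₁ r) = 0 := by
    filter_upwards [eventually_blockCharpoly_ne_zero (a := lamMu μc μm - κ)
      (b := lamEps εc εm + κ) (c := ω ^ 2 * dMu μc μm εc εm * sCoef n)
      (d := ω ^ 2 * dEps μc μm εc εm * rCoef n) (x := ω * cMu μc μm εc εm * qCoef n)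
      (y := ω * cEps μc μm εc εm * pCoef n) (fun heq => hκ (by linear_combination heq / 2))
      ((add_left_injective κ).ne hne) hτ] with r hinner
    obtain ⟨v, hv, hWv⟩ := hτeig r
    have hdet := Matrix.det_sub_smul_one_eq_zero_of_mulVec_eq hv hWv
    rw [det_Wmat_sub_smul_one] at hdet
    exact (mul_eq_zero.1 hdet).resolve_right hinner
  refine (isBigO_sub_secondOrder_of_blockCharpoly_eq_zero (sub_ne_zero.1 (hgap ▸ hplus)) hτ
    houter).congr_left fun r => ?_
  rw [hgap]
  ring

/-- the eigenvalue of `W(r) = W₀ + rW₁ + r²W₂` continuing the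
first diagonal entry `λ_μ + 1/(2(2n+1))` satisfies
`τ₁(r) = λ_μ + 1/(2(2n+1)) + (rω)²[C_εC_μp_nq_n/(λ_μ − λ_ε + p_n) + D_μr_n] + O(r³)`,
assuming `λ_μ − λ_ε ± p_n ≠ 0` (and `λ_μ ≠ λ_ε`). -/
theorem sphere_second_order_eigenvalue_correction
    (n : ℕ) (hn : 1 ≤ n) (μc μm εc εm ω : ℂ)
    (hμ : μm ≠ μc) (hε : εm ≠ εc)
    (hne : lamMu μc μm ≠ lamEps εc εm)
    (hplus : lamMu μc μm - lamEps εc εm + pCoef n ≠ 0)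
    (hminus : lamMu μc μm - lamEps εc εm - pCoef n ≠ 0)
    (τ₁ : ℝ → ℂ)
    (hτ0 : τ₁ 0 = lamMu μc μm + 1 / (2 * (2 * (n : ℂ) + 1)))
    (hτc : ContinuousAt τ₁ 0)
    (hτeig : ∀ r : ℝ, ∃ v : Fin 4 → ℂ, v ≠ 0 ∧
        (Wmat n μc μm εc εm ω r).mulVec v = τ₁ r • v) :
    (fun r : ℝ => τ₁ r -
        (lamMu μc μm + 1 / (2 * (2 * (n : ℂ) + 1)) +
          ((r : ℂ) * ω) ^ 2 *
            (cEps μc μm εc εm * cMu μc μm εc εm * pCoef n * qCoef n /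
                (lamMu μc μm - lamEps εc εm + pCoef n) +
              dMu μc μm εc εm * rCoef n)))
      =O[nhds 0] fun r : ℝ => r ^ 3 :=
  sphere_second_order_eigenvalue_correction_general n μc μm εc εm ω hne hplus τ₁ hτ0 hτc hτeig
end

section
/- For n ≥ 2, the scattering coefficients S_n^{TE} and S_n^{TM} of a sphere of radius r are O(r⁴) as r → 0 (in fact O(r^{2n+1})), where S_n^{TE} and S_n^{TM} are defined via spherical Bessel function quotients as in the sphere transmission problem. -/
open scoped Nat
open Complex

/-- The Rayleigh operator `(1/t d/dt)^n` applied to a function. -/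
noncomputable def rayleigh : ℕ → (ℝ → ℝ) → ℝ → ℝ
  | 0, f, t => f t
  | n + 1, f, t => deriv (rayleigh n f) t / t

/-- The spherical Bessel function of the first kind `j_n`. -/
noncomputable def sphJ (n : ℕ) (t : ℝ) : ℝ :=
  (-1 : ℝ) ^ n * t ^ n * rayleigh n (fun s => Real.sin s / s) t

/-- The spherical Bessel function of the second kind `y_n`. -/
noncomputable def sphY (n : ℕ) (t : ℝ) : ℝ :=
  -((-1 : ℝ) ^ n * t ^ n * rayleigh n (fun s => Real.cos s / s) t)

/-- The spherical Hankel function of the first kind `h_n^{(1)} = j_n + i y_n`. -/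
noncomputable def sphH (n : ℕ) (t : ℝ) : ℂ :=
  (sphJ n t : ℂ) + Complex.I * (sphY n t : ℂ)

/-- `𝒥_n(t) = j_n(t) + t j_n'(t)`. -/
noncomputable def sphJcal (n : ℕ) (t : ℝ) : ℝ := sphJ n t + t * deriv (sphJ n) t

/-- `ℋ_n(t) = h_n^{(1)}(t) + t (h_n^{(1)})'(t)`. -/
noncomputable def sphHcal (n : ℕ) (t : ℝ) : ℂ := sphH n t + (t : ℂ) * deriv (sphH n) t

/-- The TE scattering coefficient `S_n^{TE}` of a sphere of radius `r`. -/
noncomputable def STE (n : ℕ) (μm μc : ℂ) (km kc : ℝ) (r : ℝ) : ℂ :=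
  (μc * (sphJ n (kc * r) : ℂ) * (sphJcal n (km * r) : ℂ) -
      μm * (sphJ n (km * r) : ℂ) * (sphJcal n (kc * r) : ℂ)) /
    (μm * (sphJcal n (kc * r) : ℂ) * sphH n (km * r) -
      μc * (sphJ n (kc * r) : ℂ) * sphHcal n (km * r))

/-- The TM scattering coefficient `S_n^{TM}` of a sphere of radius `r`. -/
noncomputable def STM (n : ℕ) (εm εc : ℂ) (km kc : ℝ) (r : ℝ) : ℂ :=
  (εc * (sphJ n (kc * r) : ℂ) * (sphJcal n (km * r) : ℂ) -
      εm * (sphJ n (km * r) : ℂ) * (sphJcal n (kc * r) : ℂ)) /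
    (εm * (sphJcal n (kc * r) : ℂ) * sphH n (km * r) -
      εc * (sphJ n (kc * r) : ℂ) * sphHcal n (km * r))

/-!
Poisson's integral gives `j_n(t) = tⁿ p_n(t)` with `p_n` continuous and `p_n(0) > 0`, and
Rayleigh's formula gives `y_n(t) = -(-1)ⁿ N_n(t) / tⁿ⁺¹` with `N_n` continuous and
`N_n(0) ≠ 0`; differentiating these representations gives the same behaviour for `𝒥_n`, `ℋ_n`.
Hence as `r → 0⁺` the numerator of `S_n` is `O(r²ⁿ)`, while `r` times its denominator tends to
`i p_n(0) (-(-1)ⁿ N_n(0)) k_cⁿ k_m⁻ⁿ⁻¹ ((n + 1) μ_m + n μ_c) ≠ 0`.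
-/

open Asymptotics Filter
open Topology MeasureTheory intervalIntegral Polynomial

theorem rayleigh_eq_of_hasDerivAt {f : ℝ → ℝ} {F : ℕ → ℝ → ℝ} (h₀ : ∀ t ≠ 0, f t = F 0 t)
    (hF : ∀ n, ∀ t ≠ 0, HasDerivAt (F n) (t * F (n + 1) t) t) (n : ℕ) {t : ℝ} (ht : t ≠ 0) :
    rayleigh n f t = F n t := by
  induction n generalizing t with
  | zero => exact h₀ t ht
  | succ n ih =>
    have hev : rayleigh n f =ᶠ[𝓝 t] F n :=
      eventually_of_mem (isOpen_ne.mem_nhds ht) fun s hs => ih hs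
    rw [rayleigh, hev.deriv_eq, (hF n t ht).deriv, mul_div_cancel_left₀ _ ht]

theorem hasDerivAt_pow_mul_of_eventuallyEq {g F : ℝ → ℝ} {t G : ℝ} (n : ℕ)
    (hg : g =ᶠ[𝓝 t] fun s => s ^ n * F s) (hF : HasDerivAt F (t * G) t) :
    HasDerivAt g (n * t ^ (n - 1) * F t + t ^ n * (t * G)) t :=
  ((hasDerivAt_pow n t).mul hF).congr_of_eventuallyEq hg

theorem self_add_mul_deriv_eq_of_eventuallyEq {g F : ℝ → ℝ} {t G : ℝ} (n : ℕ)
    (hg : g =ᶠ[𝓝 t] fun s => s ^ n * F s) (hF : HasDerivAt F (t * G) t) :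
    g t + t * deriv g t = t ^ n * ((n + 1) * F t + t ^ 2 * G) := by
  have htn : t * (n * t ^ (n - 1)) = n * t ^ n := by
    rcases n with _ | n
    · simp
    · rw [Nat.add_sub_cancel, pow_succ]; ring
  rw [(hasDerivAt_pow_mul_of_eventuallyEq n hg hF).deriv, hg.eq_of_nhds]
  linear_combination F t * htn

noncomputable def poissonIntegral (n : ℕ) (t : ℝ) : ℝ :=
  ∫ s in (-1 : ℝ)..1, Real.cos (t * s) * (1 - s ^ 2) ^ n

theorem two_mul_succ_mul_integral_mul_sin (n : ℕ) (t : ℝ) :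
    2 * (n + 1) * ∫ s in (-1 : ℝ)..1, s * Real.sin (t * s) * (1 - s ^ 2) ^ n =
      t * poissonIntegral (n + 1) t := by
  have hu : ∀ s ∈ Set.uIcc (-1 : ℝ) 1, HasDerivAt (fun s : ℝ => (1 - s ^ 2) ^ (n + 1))
      (-(2 * (n + 1) * (s * (1 - s ^ 2) ^ n))) s := fun s _ =>
    (((hasDerivAt_pow 2 s).const_sub 1).pow (n + 1)).congr_deriv (by push_cast; ring)
  have hv : ∀ s ∈ Set.uIcc (-1 : ℝ) 1,
      HasDerivAt (fun s : ℝ => Real.sin (t * s)) (t * Real.cos (t * s)) s := fun s _ =>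
    ((hasDerivAt_id' s).const_mul t).sin.congr_deriv (by ring)
  have hparts := integral_mul_deriv_eq_deriv_mul hu hv
    (Continuous.intervalIntegrable (by fun_prop) _ _)
    (Continuous.intervalIntegrable (by fun_prop) _ _)
  norm_num at hparts
  calc _ = ∫ s in (-1 : ℝ)..1, 2 * (n + 1) * (s * (1 - s ^ 2) ^ n) * Real.sin (t * s) := by
        rw [← intervalIntegral.integral_const_mul]; congr 1; ext s; ring
    _ = _ := by
        rw [← hparts, poissonIntegral, ← intervalIntegral.integral_const_mul]
        congr 1; ext s; ring

theorem hasDerivAt_poissonIntegral' (n : ℕ) (t : ℝ) :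
    HasDerivAt (poissonIntegral n)
      (∫ s in (-1 : ℝ)..1, -(s * Real.sin (t * s)) * (1 - s ^ 2) ^ n) t := by
  have hbound : ∀ᵐ s, s ∈ Set.uIoc (-1 : ℝ) 1 → ∀ x ∈ Metric.ball t 1,
      ‖-(s * Real.sin (x * s)) * (1 - s ^ 2) ^ n‖ ≤ 1 := by
    refine Eventually.of_forall fun s hs x _ => ?_
    rw [Set.uIoc_of_le (by norm_num)] at hs
    have hs1 : |s| ≤ 1 := abs_le.2 ⟨hs.1.le, hs.2⟩
    have hs2 : |1 - s ^ 2| ≤ 1 := abs_le.2 ⟨by nlinarith [abs_le.1 hs1], by nlinarith⟩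
    calc ‖-(s * Real.sin (x * s)) * (1 - s ^ 2) ^ n‖
        = |s| * |Real.sin (x * s)| * |1 - s ^ 2| ^ n := by simp
      _ ≤ 1 * 1 * 1 ^ n := by gcongr; exact Real.abs_sin_le_one _
      _ = 1 := by simp
  have hderiv : ∀ᵐ s, s ∈ Set.uIoc (-1 : ℝ) 1 → ∀ x ∈ Metric.ball t 1,
      HasDerivAt (fun x => Real.cos (x * s) * (1 - s ^ 2) ^ n)
        (-(s * Real.sin (x * s)) * (1 - s ^ 2) ^ n) x := by
    refine Eventually.of_forall fun s _ x _ => ?_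
    exact ((hasDerivAt_mul_const s).cos.mul_const _).congr_deriv (by ring)
  exact (hasDerivAt_integral_of_dominated_loc_of_deriv_le (Metric.ball_mem_nhds t one_pos)
    (Eventually.of_forall fun x => (by fun_prop : Continuous fun s : ℝ =>
      Real.cos (x * s) * (1 - s ^ 2) ^ n).aestronglyMeasurable)
    (Continuous.intervalIntegrable (by fun_prop) _ _)
    (by fun_prop : Continuous fun s : ℝ =>
      -(s * Real.sin (t * s)) * (1 - s ^ 2) ^ n).aestronglyMeasurable
    hbound intervalIntegrable_const hderiv).2

theorem hasDerivAt_poissonIntegral (n : ℕ) (t : ℝ) :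
    HasDerivAt (poissonIntegral n) (-(t * poissonIntegral (n + 1) t / (2 * (n + 1)))) t := by
  refine (hasDerivAt_poissonIntegral' n t).congr_deriv ?_
  rw [← two_mul_succ_mul_integral_mul_sin, mul_div_cancel_left₀ _ (by positivity),
    ← intervalIntegral.integral_neg]
  congr 1; ext s; ring

theorem poissonIntegral_zero_left {t : ℝ} (ht : t ≠ 0) :
    poissonIntegral 0 t = 2 * Real.sin t / t := by
  simp only [poissonIntegral, pow_zero, mul_one]
  rw [intervalIntegral.integral_comp_mul_left (fun u => Real.cos u) ht, integral_cos]
  simp only [mul_one, mul_neg, Real.sin_neg, smul_eq_mul]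
  field_simp
  ring

theorem poissonIntegral_zero_right_pos (n : ℕ) : 0 < poissonIntegral n 0 := by
  simp only [poissonIntegral, zero_mul, Real.cos_zero, one_mul]
  refine intervalIntegral_pos_of_pos_on (Continuous.intervalIntegrable (by fun_prop) _ _)
    (fun s hs => pow_pos (by nlinarith [hs.1, hs.2]) n) (by norm_num)

/-- Poisson's integral for `j_n(t) / tⁿ`, which extends it continuously to `t = 0`. -/
noncomputable def poissonJ (n : ℕ) (t : ℝ) : ℝ := poissonIntegral n t / (2 ^ (n + 1) * n !)

theorem hasDerivAt_poissonJ (n : ℕ) (t : ℝ) :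
    HasDerivAt (poissonJ n) (-(t * poissonJ (n + 1) t)) t := by
  refine ((hasDerivAt_poissonIntegral n t).div_const _).congr_deriv ?_
  rw [poissonJ, Nat.factorial_succ]
  push_cast
  field_simp
  ring

theorem continuous_poissonJ (n : ℕ) : Continuous (poissonJ n) :=
  continuous_iff_continuousAt.2 fun t => (hasDerivAt_poissonJ n t).continuousAt

theorem poissonJ_zero_pos (n : ℕ) : 0 < poissonJ n 0 :=
  div_pos (poissonIntegral_zero_right_pos n) (by positivity)

theorem rayleigh_sin_div_eq {t : ℝ} (n : ℕ) (ht : t ≠ 0) :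
    rayleigh n (fun s => Real.sin s / s) t = (-1) ^ n * poissonJ n t := by
  refine rayleigh_eq_of_hasDerivAt (F := fun n t => (-1) ^ n * poissonJ n t) ?_ ?_ n ht
  · intro t ht
    simp only [poissonJ, poissonIntegral_zero_left ht]
    field_simp
    ring
  · intro n t _
    exact ((hasDerivAt_poissonJ n t).const_mul _).congr_deriv (by ring)

theorem sphJ_eq {t : ℝ} (n : ℕ) (ht : t ≠ 0) : sphJ n t = t ^ n * poissonJ n t := by
  rw [sphJ, rayleigh_sin_div_eq n ht]
  have h : ((-1 : ℝ) ^ n) * (-1) ^ n = 1 := by rw [← mul_pow]; norm_num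
  linear_combination t ^ n * poissonJ n t * h

/-- The polynomials `(Pₙ, Qₙ)` with
`(t⁻¹ d/dt)ⁿ (cos t / t) = (Pₙ(t²) cos t + t Qₙ(t²) sin t) / t²ⁿ⁺¹`. -/
noncomputable def cosRayleighPoly : ℕ → ℝ[X] × ℝ[X]
  | 0 => (1, 0)
  | n + 1 =>
    (C (-(2 * (n : ℝ) + 1)) * (cosRayleighPoly n).1 + 2 * X * derivative (cosRayleighPoly n).1 +
        X * (cosRayleighPoly n).2,
      C (-(2 * (n : ℝ))) * (cosRayleighPoly n).2 + 2 * X * derivative (cosRayleighPoly n).2 -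
        (cosRayleighPoly n).1)

noncomputable def cosRayleighNum (n : ℕ) (t : ℝ) : ℝ :=
  (cosRayleighPoly n).1.eval (t ^ 2) * Real.cos t +
    t * (cosRayleighPoly n).2.eval (t ^ 2) * Real.sin t

theorem continuous_cosRayleighNum (n : ℕ) : Continuous (cosRayleighNum n) := by
  unfold cosRayleighNum; fun_prop

theorem cosRayleighNum_succ_zero (n : ℕ) :
    cosRayleighNum (n + 1) 0 = -(2 * n + 1) * cosRayleighNum n 0 := by
  simp [cosRayleighNum, cosRayleighPoly]

theorem cosRayleighNum_zero_ne_zero (n : ℕ) : cosRayleighNum n 0 ≠ 0 := by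
  induction n with
  | zero => simp [cosRayleighNum, cosRayleighPoly]
  | succ n ih =>
    rw [cosRayleighNum_succ_zero]
    exact mul_ne_zero (neg_ne_zero.2 (by positivity)) ih

theorem hasDerivAt_cosRayleighNum_div (n : ℕ) {t : ℝ} (ht : t ≠ 0) :
    HasDerivAt (fun s => cosRayleighNum n s / s ^ (2 * n + 1))
      (t * (cosRayleighNum (n + 1) t / t ^ (2 * (n + 1) + 1))) t := by
  set P := (cosRayleighPoly n).1
  set Q := (cosRayleighPoly n).2
  have hsq : HasDerivAt (fun s : ℝ => s ^ 2) (2 * t) t := by simpa using hasDerivAt_pow 2 t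
  have hP := (P.hasDerivAt (t ^ 2)).comp t hsq
  have hQ := (Q.hasDerivAt (t ^ 2)).comp t hsq
  have hnum : HasDerivAt (cosRayleighNum n)
      (P.derivative.eval (t ^ 2) * (2 * t) * Real.cos t - P.eval (t ^ 2) * Real.sin t +
        ((Q.eval (t ^ 2) + t * (Q.derivative.eval (t ^ 2) * (2 * t))) * Real.sin t +
          t * Q.eval (t ^ 2) * Real.cos t)) t :=
    ((hP.mul (Real.hasDerivAt_cos t)).add
      (((hasDerivAt_id t).mul hQ).mul (Real.hasDerivAt_sin t))).congr_deriv (by simp; ring)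
  refine (hnum.div (hasDerivAt_pow (2 * n + 1) t) (pow_ne_zero _ ht)).congr_deriv ?_
  simp only [cosRayleighNum, cosRayleighPoly, P, Q, eval_add, eval_mul, eval_sub, eval_ofNat,
    eval_C, eval_X]
  field_simp
  push_cast
  ring

theorem rayleigh_cos_div_eq {t : ℝ} (n : ℕ) (ht : t ≠ 0) :
    rayleigh n (fun s => Real.cos s / s) t = cosRayleighNum n t / t ^ (2 * n + 1) :=
  rayleigh_eq_of_hasDerivAt (F := fun n t => cosRayleighNum n t / t ^ (2 * n + 1))
    (fun t _ => by simp [cosRayleighNum, cosRayleighPoly])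
    (fun n _ ht => hasDerivAt_cosRayleighNum_div n ht) n ht

theorem sphY_eq {t : ℝ} (n : ℕ) (ht : t ≠ 0) :
    sphY n t = t ^ n * (-(-1) ^ n * (cosRayleighNum n t / t ^ (2 * n + 1))) := by
  rw [sphY, rayleigh_cos_div_eq n ht]
  ring

theorem sphJ_eventuallyEq {t : ℝ} (n : ℕ) (ht : t ≠ 0) :
    sphJ n =ᶠ[𝓝 t] fun s => s ^ n * poissonJ n s :=
  eventually_of_mem (isOpen_ne.mem_nhds ht) fun _ hs => sphJ_eq n hs

theorem sphY_eventuallyEq {t : ℝ} (n : ℕ) (ht : t ≠ 0) :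
    sphY n =ᶠ[𝓝 t] fun s => s ^ n * (-(-1) ^ n * (cosRayleighNum n s / s ^ (2 * n + 1))) :=
  eventually_of_mem (isOpen_ne.mem_nhds ht) fun _ hs => sphY_eq n hs

theorem sphJcal_eq {t : ℝ} (n : ℕ) (ht : t ≠ 0) :
    sphJcal n t = t ^ n * ((n + 1) * poissonJ n t - t ^ 2 * poissonJ (n + 1) t) := by
  rw [sphJcal, self_add_mul_deriv_eq_of_eventuallyEq n (sphJ_eventuallyEq n ht)
    ((hasDerivAt_poissonJ n t).congr_deriv (mul_neg t _).symm)]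
  ring

theorem hasDerivAt_neg_one_pow_mul_cosRayleighNum_div (n : ℕ) {t : ℝ} (ht : t ≠ 0) :
    HasDerivAt (fun s => -(-1) ^ n * (cosRayleighNum n s / s ^ (2 * n + 1)))
      (t * (-(-1) ^ n * (cosRayleighNum (n + 1) t / t ^ (2 * (n + 1) + 1)))) t :=
  ((hasDerivAt_cosRayleighNum_div n ht).const_mul _).congr_deriv (mul_left_comm _ _ _)

theorem sphY_add_mul_deriv_eq {t : ℝ} (n : ℕ) (ht : t ≠ 0) :
    sphY n t + t * deriv (sphY n) t = t ^ n *
      ((n + 1) * (-(-1) ^ n * (cosRayleighNum n t / t ^ (2 * n + 1))) +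
        t ^ 2 * (-(-1) ^ n * (cosRayleighNum (n + 1) t / t ^ (2 * (n + 1) + 1)))) :=
  self_add_mul_deriv_eq_of_eventuallyEq n (sphY_eventuallyEq n ht)
    (hasDerivAt_neg_one_pow_mul_cosRayleighNum_div n ht)

theorem sphHcal_eq {t : ℝ} (n : ℕ) (ht : t ≠ 0) :
    sphHcal n t = sphJcal n t + I * (sphY n t + t * deriv (sphY n) t : ℝ) := by
  have hJ := hasDerivAt_pow_mul_of_eventuallyEq n (sphJ_eventuallyEq n ht)
    ((hasDerivAt_poissonJ n t).congr_deriv (mul_neg t _).symm)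
  have hY := hasDerivAt_pow_mul_of_eventuallyEq n (sphY_eventuallyEq n ht)
    (hasDerivAt_neg_one_pow_mul_cosRayleighNum_div n ht)
  have hH : HasDerivAt (sphH n) (deriv (sphJ n) t + I * deriv (sphY n) t) t := by
    rw [hJ.deriv, hY.deriv]
    exact hJ.ofReal_comp.add (hY.ofReal_comp.const_mul I)
  rw [sphHcal, sphJcal, hH.deriv, sphH]
  push_cast
  ring

theorem tendsto_nhdsWithin_of_continuous_of_eqOn {X Y : Type*} [TopologicalSpace X]
    [TopologicalSpace Y] {f g : X → Y} {s : Set X} {x : X} {y : Y} (hg : Continuous g)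
    (hfg : Set.EqOn g f s) (hy : g x = y) : Tendsto f (𝓝[s] x) (𝓝 y) :=
  hy ▸ tendsto_nhdsWithin_congr hfg hg.continuousWithinAt.tendsto

theorem tendsto_sphJ_div_pow (n : ℕ) :
    Tendsto (fun t : ℝ => (sphJ n t : ℂ) / (t : ℂ) ^ n) (𝓝[>] 0) (𝓝 (poissonJ n 0 : ℂ)) := by
  refine tendsto_nhdsWithin_of_continuous_of_eqOn (continuous_ofReal.comp (continuous_poissonJ n))
    (fun t (ht : 0 < t) => ?_) rfl
  have : (t : ℂ) ≠ 0 := by exact_mod_cast ht.ne'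
  simp only [Function.comp_apply, sphJ_eq n ht.ne']
  push_cast
  field_simp

theorem tendsto_sphJcal_div_pow (n : ℕ) :
    Tendsto (fun t : ℝ => (sphJcal n t : ℂ) / (t : ℂ) ^ n) (𝓝[>] 0)
      (𝓝 ((n + 1) * poissonJ n 0 : ℂ)) := by
  have hcont : Continuous fun t : ℝ =>
      (((n + 1) * poissonJ n t - t ^ 2 * poissonJ (n + 1) t : ℝ) : ℂ) := by
    have := continuous_poissonJ n; have := continuous_poissonJ (n + 1); fun_prop
  refine tendsto_nhdsWithin_of_continuous_of_eqOn hcont (fun t (ht : 0 < t) => ?_) (by simp)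
  have : (t : ℂ) ≠ 0 := by exact_mod_cast ht.ne'
  simp only [sphJcal_eq n ht.ne']
  push_cast
  field_simp

theorem tendsto_pow_succ_mul_sphH (n : ℕ) :
    Tendsto (fun t : ℝ => (t : ℂ) ^ (n + 1) * sphH n t) (𝓝[>] 0)
      (𝓝 (I * (-(-1) ^ n * cosRayleighNum n 0 : ℝ))) := by
  have hcont : Continuous fun t : ℝ =>
      ((t ^ (2 * n + 1) * poissonJ n t : ℝ) : ℂ) + I * (-(-1) ^ n * cosRayleighNum n t : ℝ) := by
    have := continuous_poissonJ n; have := continuous_cosRayleighNum n; fun_prop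
  refine tendsto_nhdsWithin_of_continuous_of_eqOn hcont (fun t (ht : 0 < t) => ?_) (by simp)
  have : (t : ℂ) ≠ 0 := by exact_mod_cast ht.ne'
  simp only [sphH, sphJ_eq n ht.ne', sphY_eq n ht.ne']
  push_cast
  field_simp
  ring

theorem tendsto_pow_succ_mul_sphHcal (n : ℕ) :
    Tendsto (fun t : ℝ => (t : ℂ) ^ (n + 1) * sphHcal n t) (𝓝[>] 0)
      (𝓝 (-(n * (I * (-(-1) ^ n * cosRayleighNum n 0 : ℝ))))) := by
  have hcont : Continuous fun t : ℝ =>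
      ((t ^ (2 * n + 1) * ((n + 1) * poissonJ n t - t ^ 2 * poissonJ (n + 1) t) : ℝ) : ℂ) +
        I * (-(-1) ^ n * ((n + 1) * cosRayleighNum n t + cosRayleighNum (n + 1) t) : ℝ) := by
    have := continuous_poissonJ n; have := continuous_poissonJ (n + 1)
    have := continuous_cosRayleighNum n; have := continuous_cosRayleighNum (n + 1)
    fun_prop
  refine tendsto_nhdsWithin_of_continuous_of_eqOn hcont (fun t (ht : 0 < t) => ?_)
    (by simp [cosRayleighNum_succ_zero]; ring)
  have : (t : ℂ) ≠ 0 := by exact_mod_cast ht.ne'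
  simp only [sphHcal_eq n ht.ne', sphJcal_eq n ht.ne', sphY_add_mul_deriv_eq n ht.ne']
  push_cast
  field_simp
  ring

theorem tendsto_const_mul_nhdsGT_zero {k : ℝ} (hk : 0 < k) :
    Tendsto (fun r => k * r) (𝓝[>] 0) (𝓝[>] 0) := by
  have := tendsto_comap (f := fun r : ℝ => k * r) (x := 𝓝[>] 0)
  rwa [comap_mulLeft_nhdsGT_zero hk] at this

theorem Filter.Tendsto.comp_const_mul_div_pow {f : ℝ → ℂ} {a : ℂ} {k : ℝ} {n : ℕ} (hk : 0 < k)
    (hf : Tendsto (fun t => f t / (t : ℂ) ^ n) (𝓝[>] 0) (𝓝 a)) :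
    Tendsto (fun r => f (k * r) / (r : ℂ) ^ n) (𝓝[>] 0) (𝓝 (k ^ n * a)) := by
  refine ((hf.comp (tendsto_const_mul_nhdsGT_zero hk)).const_mul ((k : ℂ) ^ n)).congr fun r => ?_
  have hk' : (k : ℂ) ^ n ≠ 0 := pow_ne_zero n (by exact_mod_cast hk.ne')
  simp only [Function.comp_apply, ofReal_mul, mul_pow]
  rw [← mul_div_assoc, mul_div_mul_left _ _ hk']

theorem Filter.Tendsto.pow_mul_comp_const_mul {f : ℝ → ℂ} {a : ℂ} {k : ℝ} {n : ℕ} (hk : 0 < k)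
    (hf : Tendsto (fun t : ℝ => (t : ℂ) ^ n * f t) (𝓝[>] 0) (𝓝 a)) :
    Tendsto (fun r : ℝ => (r : ℂ) ^ n * f (k * r)) (𝓝[>] 0) (𝓝 (a / k ^ n)) := by
  refine ((hf.comp (tendsto_const_mul_nhdsGT_zero hk)).div_const ((k : ℂ) ^ n)).congr fun r => ?_
  have hk' : (k : ℂ) ^ n ≠ 0 := pow_ne_zero n (by exact_mod_cast hk.ne')
  simp only [Function.comp_apply, ofReal_mul, mul_pow, mul_assoc, mul_div_cancel_left₀ _ hk']

theorem Filter.Tendsto.div_div_pow_add {α 𝕜 : Type*} [NormedField 𝕜] {l : Filter α}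
    {x N D : α → 𝕜} {a b : 𝕜} {p q : ℕ} (hN : Tendsto (fun r => N r / x r ^ p) l (𝓝 a))
    (hD : Tendsto (fun r => x r ^ q * D r) l (𝓝 b)) (hb : b ≠ 0) :
    Tendsto (fun r => N r / D r / x r ^ (p + q)) l (𝓝 (a / b)) :=
  (hN.div hD hb).congr fun r => by simp only [Pi.div_apply]; ring

theorem tendsto_STE_div_pow (n : ℕ) {μm μc : ℂ} (hμ : ((n : ℂ) + 1) * μm + (n : ℂ) * μc ≠ 0)
    {km kc : ℝ} (hkm : 0 < km) (hkc : 0 < kc) :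
    ∃ c, Tendsto (fun r : ℝ => STE n μm μc km kc r / (r : ℂ) ^ (2 * n + 1)) (𝓝[>] 0) (𝓝 c) := by
  set α : ℂ := ↑(poissonJ n 0)
  set β : ℂ := ↑(-(-1) ^ n * cosRayleighNum n 0)
  have hj {k : ℝ} (hk : 0 < k) := (tendsto_sphJ_div_pow n).comp_const_mul_div_pow hk
  have hJ {k : ℝ} (hk : 0 < k) := (tendsto_sphJcal_div_pow n).comp_const_mul_div_pow hk
  have hN := (((hj hkc).const_mul μc).mul (hJ hkm)).sub (((hj hkm).const_mul μm).mul (hJ hkc))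
  have hD := (((hJ hkc).const_mul μm).mul
      ((tendsto_pow_succ_mul_sphH n).pow_mul_comp_const_mul hkm)).sub
    (((hj hkc).const_mul μc).mul ((tendsto_pow_succ_mul_sphHcal n).pow_mul_comp_const_mul hkm))
  have hb : μm * (kc ^ n * ((n + 1) * α)) * (I * β / km ^ (n + 1)) -
      μc * (kc ^ n * α) * (-(n * (I * β)) / km ^ (n + 1)) ≠ 0 := by
    have hα : α ≠ 0 := ofReal_ne_zero.2 (poissonJ_zero_pos n).ne'
    have hβ : β ≠ 0 := by
      simpa [β] using cosRayleighNum_zero_ne_zero n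
    have hkc' : (kc : ℂ) ≠ 0 := by exact_mod_cast hkc.ne'
    have hkm' : (km : ℂ) ≠ 0 := by exact_mod_cast hkm.ne'
    rw [show μm * (kc ^ n * ((n + 1) * α)) * (I * β / km ^ (n + 1)) -
        μc * (kc ^ n * α) * (-(n * (I * β)) / km ^ (n + 1)) =
        I * α * β * kc ^ n / km ^ (n + 1) * ((n + 1) * μm + n * μc) by ring]
    simp [hα, hβ, hkc', hkm', hμ]
  refine ⟨_, Tendsto.div_div_pow_add (x := fun r : ℝ => (r : ℂ)) (q := 1)
    (hN.congr fun r => ?_) (hD.congr' ?_) hb⟩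
  · ring
  · filter_upwards [self_mem_nhdsWithin] with r (hr : 0 < r)
    have : (r : ℂ) ≠ 0 := by exact_mod_cast hr.ne'
    field_simp
    ring

theorem isBigO_STE (n : ℕ) {μm μc : ℂ} (hμ : ((n : ℂ) + 1) * μm + (n : ℂ) * μc ≠ 0)
    {km kc : ℝ} (hkm : 0 < km) (hkc : 0 < kc) :
    (fun r => STE n μm μc km kc r) =O[𝓝[>] 0] fun r : ℝ => r ^ (2 * n + 1) := by
  obtain ⟨c, hc⟩ := tendsto_STE_div_pow n hμ hkm hkc
  have hpow : ∀ᶠ r : ℝ in 𝓝[>] 0, (r : ℂ) ^ (2 * n + 1) = 0 → STE n μm μc km kc r = 0 := by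
    filter_upwards [self_mem_nhdsWithin] with r (hr : 0 < r) h
    exact absurd h (pow_ne_zero _ (by exact_mod_cast hr.ne'))
  exact (isBigO_of_div_tendsto_nhds hpow c hc).trans (isBigO_of_le _ fun r => by simp)

/-- for `n ≥ 2` the scattering coefficients `S_n^{TE}` and
`S_n^{TM}` of a sphere of radius `r` are `O(r⁴)` as `r → 0⁺` (in fact
`O(r^{2n+1})`). -/
theorem sphere_scattering_coefficients_higher_order
    (n : ℕ) (hn : 2 ≤ n) (μm μc εm εc : ℂ)
    (hμ : ((n : ℂ) + 1) * μm + (n : ℂ) * μc ≠ 0)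
    (hε : ((n : ℂ) + 1) * εm + (n : ℂ) * εc ≠ 0)
    (km kc : ℝ) (hkm : 0 < km) (hkc : 0 < kc) :
    ((fun r : ℝ => STE n μm μc km kc r) =O[nhdsWithin 0 (Set.Ioi 0)] fun r : ℝ => r ^ 4) ∧
    ((fun r : ℝ => STM n εm εc km kc r) =O[nhdsWithin 0 (Set.Ioi 0)] fun r : ℝ => r ^ 4) ∧
    ((fun r : ℝ => STE n μm μc km kc r) =O[nhdsWithin 0 (Set.Ioi 0)] fun r : ℝ => r ^ (2 * n + 1)) ∧
    ((fun r : ℝ => STM n εm εc km kc r) =O[nhdsWithin 0 (Set.Ioi 0)] fun r : ℝ => r ^ (2 * n + 1)) := by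
  have hTE := isBigO_STE n hμ hkm hkc
  have hTM : (fun r => STM n εm εc km kc r) =O[𝓝[>] 0] fun r : ℝ => r ^ (2 * n + 1) :=
    isBigO_STE n hε hkm hkc
  have hpow : (fun r : ℝ => r ^ (2 * n + 1)) =O[𝓝[>] 0] fun r => r ^ 4 :=
    (isLittleO_pow_pow (by omega)).isBigO.mono nhdsWithin_le_nhds
  exact ⟨hTE.trans hpow, hTM.trans hpow, hTE, hTM⟩
end
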